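/- Let k ≥ 1 be an integer and let Φ : ℝ² → ℂ be a C^k function that is 1-periodic in each variable. For integers n ≥ 1 and x, x' ∈ ℤ define H^{(n)}_{x,x'} = (1/(n+1)²) Σ_{j,j'=0}^n Φ(j/(n+1), j'/(n+1)) exp(2πi j x/(n+1)) exp(2πi j' x'/(n+1)). Then there exists a constant C > 0 such that for all n ≥ 1, all x, x' ∈ ℤ, and all nonnegative integers ℓ, ℓ' with ℓ + ℓ' ≤ k, one has |H^{(n)}_{x,x'}| ≤ C / (χ_n(x)^ℓ · χ_n(x')^{ℓ'}). -/

import Mathlib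

/-!
Put `N = n + 1`, `ω = e^{2πix/N}`, `ω' = e^{2πix'/N}` and `a(j, j') = Φ(j/N, j'/N)`. Since `a` is
`N`-periodic in each index, summation by parts turns `(ω - 1)^e (ω' - 1)^e' Σ a(j, j') ω^j ω'^j'`
into the same sum of the mixed difference `Δ₁^e Δ₂^e' a`. By the mean value theorem, a mixed
difference of order `e + e' ≤ k` of the `C^k` function `Φ` with steps of length `1/N` is
`O(N^-(e+e'))`, so `N^(e+e') |ω - 1|^e |ω' - 1|^e' |H| = O(1)`. Finally
`N |ω - 1| = 2N |sin(πx/N)| ≥ 4 (χ_n(x) - 1)`, which dominates `χ_n(x)` unless `N ∣ x`; in that case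
`χ_n(x) = 1` and one takes `e = 0`.
-/

open Real

noncomputable section

/-- The `(n+1)`-periodic weight `χ_n : ℤ → ℝ`, defined on the representative
`x̄ = x mod (n+1) ∈ {0,…,n}` by `χ_n(x̄) = min(1 + x̄, n + 2 − x̄)`. -/
def chiN (n : ℕ) (x : ℤ) : ℝ :=
  min ((1 : ℝ) + ((x % ((n : ℤ) + 1) : ℤ) : ℝ)) ((n : ℝ) + 2 - ((x % ((n : ℤ) + 1) : ℤ) : ℝ))

open Finset

section IteratedDifferences

variable {E F : Type*}

def iterFwdDiff [AddCommMonoid E] [AddCommGroup F] (L : List E) (f : E → F) : E → F :=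
  L.foldl (fun g v => fwdDiff v g) f

section Algebra

variable [AddCommMonoid E] [AddCommGroup F]

@[simp]
theorem iterFwdDiff_cons (v : E) (L : List E) (f : E → F) :
    iterFwdDiff (v :: L) f = iterFwdDiff L (fwdDiff v f) := rfl

theorem iterFwdDiff_append (L₁ L₂ : List E) (f : E → F) :
    iterFwdDiff (L₁ ++ L₂) f = iterFwdDiff L₂ (iterFwdDiff L₁ f) :=
  List.foldl_append

theorem iterFwdDiff_replicate (l : ℕ) (v : E) (f : E → F) :
    iterFwdDiff (List.replicate l v) f = (fwdDiff v)^[l] f := by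
  induction l generalizing f with
  | zero => rfl
  | succ l ih => rw [List.replicate_succ, iterFwdDiff_cons, ih, Function.iterate_succ_apply]

theorem fwdDiff_comp_addMonoidHom {G : Type*} [AddCommMonoid G] (g : G →+ E) (v : G)
    (f : E → F) : fwdDiff v (f ∘ g) = fwdDiff (g v) f ∘ g := by
  funext p
  simp [fwdDiff]

theorem iterFwdDiff_comp_addMonoidHom {G : Type*} [AddCommMonoid G] (g : G →+ E)
    (L : List G) (f : E → F) : iterFwdDiff L (f ∘ g) = iterFwdDiff (L.map g) f ∘ g := by
  induction L generalizing f with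
  | nil => rfl
  | cons v L ih => rw [iterFwdDiff_cons, fwdDiff_comp_addMonoidHom, ih]; rfl

theorem Function.Periodic.fwdDiff {f : E → F} {c : E} (hf : Function.Periodic f c) (v : E) :
    Function.Periodic (fwdDiff v f) c :=
  (hf.add_const v).sub hf

theorem Function.Periodic.fwdDiff_iterate {f : E → F} {c : E} (hf : Function.Periodic f c)
    (v : E) (l : ℕ) : Function.Periodic ((_root_.fwdDiff v)^[l] f) c := by
  induction l with
  | zero => exact hf
  | succ l ih => rw [Function.iterate_succ_apply']; exact ih.fwdDiff v

end Algebra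

variable [NormedAddCommGroup E] [NormedSpace ℝ E] [NormedAddCommGroup F] [NormedSpace ℝ F]

theorem norm_iteratedFDeriv_fwdDiff_le {m : ℕ} {f : E → F} (hf : ContDiff ℝ (m + 1) f)
    {M R : ℝ} (hM : ∀ q, ‖q‖ ≤ R → ‖iteratedFDeriv ℝ (m + 1) f q‖ ≤ M) (v : E) {q : E}
    (hq : ‖q‖ + ‖v‖ ≤ R) : ‖iteratedFDeriv ℝ m (fwdDiff v f) q‖ ≤ M * ‖v‖ := by
  have hshift : ContDiff ℝ m (fun p => f (p + v)) :=
    (hf.comp (contDiff_id.add contDiff_const)).of_le (by norm_cast; omega)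
  rw [show fwdDiff v f = (fun p => f (p + v)) - f from rfl,
    iteratedFDeriv_sub_apply hshift.contDiffAt (hf.of_le (by norm_cast; omega)).contDiffAt,
    iteratedFDeriv_comp_add_right]
  have hball : Convex ℝ (Metric.closedBall (0 : E) (‖q‖ + ‖v‖)) := convex_closedBall _ _
  have := hball.norm_image_sub_le_of_norm_fderiv_le (f := iteratedFDeriv ℝ m f) (C := M)
    (x := q) (y := q + v)
    (fun p _ => (hf.differentiable_iteratedFDeriv (by norm_cast; omega)).differentiableAt)
    (fun p hp => by
      rw [norm_fderiv_iteratedFDeriv]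
      exact hM p (by simpa using (Metric.mem_closedBall.mp hp).trans hq))
    (by simp)
    (by simpa using norm_add_le q v)
  simpa using this

theorem norm_iterFwdDiff_le (L : List E) {f : E → F} (hf : ContDiff ℝ L.length f) {M R : ℝ}
    (hM : ∀ q, ‖q‖ ≤ R → ‖iteratedFDeriv ℝ L.length f q‖ ≤ M) {p : E}
    (hp : ‖p‖ + (L.map norm).sum ≤ R) : ‖iterFwdDiff L f p‖ ≤ M * (L.map norm).prod := by
  induction L generalizing f M R with
  | nil => simpa [iterFwdDiff] using hM p (by simpa using hp)
  | cons v L ih =>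
    simp only [List.length_cons, List.map_cons, List.sum_cons, List.prod_cons] at *
    have hdiff : ContDiff ℝ L.length (fwdDiff v f) :=
      ((hf.comp (contDiff_id.add contDiff_const)).sub hf).of_le (by norm_cast; omega)
    have := ih hdiff (M := M * ‖v‖) (R := R - ‖v‖)
      (fun q hq => norm_iteratedFDeriv_fwdDiff_le hf hM v (by linarith)) (by linarith)
    simpa [mul_assoc, mul_left_comm] using this

theorem exists_pos_bound_iteratedFDeriv [ProperSpace E] {k : ℕ} {f : E → F}
    (hf : ContDiff ℝ k f) (R : ℝ) :
    ∃ M > 0, ∀ m ≤ k, ∀ q : E, ‖q‖ ≤ R → ‖iteratedFDeriv ℝ m f q‖ ≤ M := by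
  have hcont : Continuous fun q => ∑ m ∈ range (k + 1), ‖iteratedFDeriv ℝ m f q‖ :=
    continuous_finsetSum _ fun m hm =>
      (hf.continuous_iteratedFDeriv (by exact_mod_cast Nat.lt_succ_iff.mp (mem_range.mp hm))).norm
  obtain ⟨C, hC⟩ := (isCompact_closedBall (0 : E) R).exists_bound_of_continuousOn hcont.continuousOn
  refine ⟨max C 1, by positivity, fun m hm q hq => ?_⟩
  calc ‖iteratedFDeriv ℝ m f q‖
      ≤ ∑ m ∈ range (k + 1), ‖iteratedFDeriv ℝ m f q‖ :=
        single_le_sum (f := fun m => ‖iteratedFDeriv ℝ m f q‖) (fun _ _ => norm_nonneg _)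
          (mem_range.mpr (Nat.lt_succ_of_le hm))
    _ ≤ C := (le_abs_self _).trans (hC q (by simpa using hq))
    _ ≤ max C 1 := le_max_left _ _

end IteratedDifferences

section SummationByParts

variable {R : Type*} [CommRing R] {N : ℕ} {ω ω' : R}

theorem sub_one_mul_sum_range (hω : ω ^ N = 1) {b : ℤ → R} (hb : Function.Periodic b N) :
    (ω - 1) * ∑ j ∈ range N, b j * ω ^ j = ∑ j ∈ range N, fwdDiff (-1) b j * ω ^ j := by
  set g : ℕ → R := fun j => b (j + -1) * ω ^ j
  have hg : g N = g 0 := by simpa [g, hω, add_comm] using hb (-1)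
  have hshift : ∑ j ∈ range N, g (j + 1) = ∑ j ∈ range N, g j := by
    have := sum_range_succ' g N
    rw [sum_range_succ, hg] at this
    exact add_right_cancel this.symm
  simp only [g, Nat.cast_add, Nat.cast_one, add_neg_cancel_right] at hshift
  simp only [fwdDiff, sub_mul, sum_sub_distrib, ← hshift, mul_sum, pow_succ]
  ring_nf

def twistedSum (N : ℕ) (a : ℤ × ℤ → R) (ω ω' : R) : R :=
  ∑ j ∈ range N, ∑ j' ∈ range N, a (j, j') * ω ^ j * ω' ^ j'

theorem twistedSum_comp_swap (a : ℤ × ℤ → R) :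
    twistedSum N (a ∘ Prod.swap) ω' ω = twistedSum N a ω ω' := by
  rw [twistedSum, twistedSum, sum_comm]
  exact sum_congr rfl fun _ _ => sum_congr rfl fun _ _ => by
    simp only [Function.comp_apply, Prod.swap_prod_mk]
    ring

theorem sub_one_mul_twistedSum_fst (hω : ω ^ N = 1) {a : ℤ × ℤ → R}
    (ha : Function.Periodic a (N, 0)) :
    (ω - 1) * twistedSum N a ω ω' = twistedSum N (fwdDiff (-1, 0) a) ω ω' := by
  set b : ℤ → R := fun i => ∑ j' ∈ range N, a (i, j') * ω' ^ j'
  have hb : Function.Periodic b N := fun i => by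
    simp only [b]
    exact sum_congr rfl fun j' _ => by rw [← ha (i, j'), Prod.mk_add_mk, add_zero]
  have key := sub_one_mul_sum_range hω hb
  simp only [twistedSum]
  convert key using 2 <;> simp [b, fwdDiff, sum_mul, mul_right_comm, sub_mul]

theorem sub_one_mul_twistedSum_snd (hω' : ω' ^ N = 1) {a : ℤ × ℤ → R}
    (ha : Function.Periodic a (0, N)) :
    (ω' - 1) * twistedSum N a ω ω' = twistedSum N (fwdDiff (0, -1) a) ω ω' := by
  have ha' : Function.Periodic (a ∘ Prod.swap) (N, 0) := fun p => ha p.swap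
  rw [← twistedSum_comp_swap, sub_one_mul_twistedSum_fst hω' ha', ← twistedSum_comp_swap]
  rfl

theorem sub_one_pow_mul_twistedSum (hω : ω ^ N = 1) (hω' : ω' ^ N = 1) {a : ℤ × ℤ → R}
    (ha₁ : Function.Periodic a (N, 0)) (ha₂ : Function.Periodic a (0, N)) (e e' : ℕ) :
    (ω - 1) ^ e * (ω' - 1) ^ e' * twistedSum N a ω ω' =
      twistedSum N ((fwdDiff (-1, 0))^[e] ((fwdDiff (0, -1))^[e'] a)) ω ω' := by
  induction e with
  | zero =>
    simp only [pow_zero, one_mul, Function.iterate_zero_apply]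
    induction e' with
    | zero => simp
    | succ e' ih =>
      rw [Function.iterate_succ_apply', ← sub_one_mul_twistedSum_snd hω' (ha₂.fwdDiff_iterate _ _),
        ← ih]
      ring
  | succ e ih =>
    rw [Function.iterate_succ_apply',
      ← sub_one_mul_twistedSum_fst hω ((ha₁.fwdDiff_iterate _ _).fwdDiff_iterate _ _), ← ih]
    ring

end SummationByParts

section RootsOfUnity

def unitRoot (N : ℕ) (x : ℤ) : ℂ := Complex.exp (2 * π * Complex.I * x / N)

theorem unitRoot_pow (N : ℕ) (x : ℤ) (j : ℕ) :
    unitRoot N x ^ j = Complex.exp (2 * π * Complex.I * j * x / N) := by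
  rw [unitRoot, ← Complex.exp_nat_mul]
  ring_nf

theorem unitRoot_pow_self {N : ℕ} (hN : N ≠ 0) (x : ℤ) : unitRoot N x ^ N = 1 := by
  rw [unitRoot_pow]
  convert Complex.exp_int_mul_two_pi_mul_I x using 2
  field_simp

theorem norm_unitRoot (N : ℕ) (x : ℤ) : ‖unitRoot N x‖ = 1 := by
  rw [unitRoot, show 2 * π * Complex.I * x / N = ((2 * π * x / N : ℝ) : ℂ) * Complex.I by
    push_cast; ring]
  exact Complex.norm_exp_ofReal_mul_I _

theorem exists_abs_sub_mul_eq_min_emod {N : ℤ} (hN : 0 < N) (x : ℤ) :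
    ∃ m : ℤ, |x - m * N| = min (x % N) (N - x % N) := by
  have hx := Int.emod_add_mul_ediv x N
  have h0 := Int.emod_nonneg x hN.ne'
  have h1 := Int.emod_lt_of_pos x hN
  rcases le_total (x % N) (N - x % N) with h | h
  · exact ⟨x / N, by rw [min_eq_left h, abs_of_nonneg] <;> linarith⟩
  · exact ⟨x / N + 1, by rw [min_eq_right h, abs_of_nonpos] <;> linarith⟩

theorem four_mul_min_emod_le_mul_norm_unitRoot_sub_one {N : ℕ} (hN : N ≠ 0) (x : ℤ) :
    4 * ((min (x % N) (N - x % N) : ℤ) : ℝ) ≤ N * ‖unitRoot N x - 1‖ := by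
  have hN' : (0 : ℝ) < N := by positivity
  obtain ⟨m, hm⟩ := exists_abs_sub_mul_eq_min_emod (by omega : (0 : ℤ) < N) x
  set d := min (x % N) (N - x % N)
  have hd : 2 * (d : ℝ) ≤ N := by exact_mod_cast (by omega : 2 * d ≤ N)
  set y : ℝ := π * (x - m * N) / N
  have hy : |y| = π * d / N := by
    rw [abs_div, abs_mul, abs_of_pos pi_pos, abs_of_pos hN', ← hm]
    push_cast
    rfl
  have hsin : 2 / π * |y| ≤ |sin y| := mul_abs_le_abs_sin <| by
    rw [hy, div_le_iff₀ hN']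
    nlinarith [pi_pos]
  have hθ : unitRoot N x = Complex.exp (Complex.I * (2 * π * x / N : ℝ)) := by
    rw [unitRoot]
    push_cast
    ring_nf
  have hshift : 2 * π * x / N / 2 = y + m * π := by
    simp only [y]
    field_simp
    ring
  rw [hθ, Complex.norm_exp_I_mul_ofReal_sub_one, hshift, sin_add_int_mul_pi, norm_mul,
    norm_mul, norm_zpow, norm_neg, norm_one, one_zpow, one_mul, Real.norm_eq_abs,
    Real.norm_eq_abs, abs_two]
  calc 4 * (d : ℝ) = N * (2 * (2 / π * |y|)) := by
        rw [hy]
        field_simp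
        ring
    _ ≤ N * (2 * |sin y|) := by gcongr

end RootsOfUnity

theorem chiN_eq_one_add (n : ℕ) (x : ℤ) :
    chiN n x = 1 + ((min (x % ↑(n + 1)) (↑(n + 1) - x % ↑(n + 1)) : ℤ) : ℝ) := by
  rw [chiN, Int.cast_min, ← min_add_add_left]
  push_cast
  ring_nf

theorem min_emod_nonneg {N : ℤ} (hN : 0 < N) (x : ℤ) : 0 ≤ min (x % N) (N - x % N) := by
  have := Int.emod_lt_of_pos x hN
  have := Int.emod_nonneg x hN.ne'
  omega

theorem one_le_chiN (n : ℕ) (x : ℤ) : 1 ≤ chiN n x := by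
  rw [chiN_eq_one_add, le_add_iff_nonneg_right]
  exact_mod_cast min_emod_nonneg (by omega) x

theorem exists_chiN_pow_le (n : ℕ) (x : ℤ) (l : ℕ) :
    ∃ e ≤ l, chiN n x ^ l ≤ (((n + 1 : ℕ) : ℝ) * ‖unitRoot (n + 1) x - 1‖) ^ e := by
  have hlow := four_mul_min_emod_le_mul_norm_unitRoot_sub_one n.succ_ne_zero x
  have hd0 := min_emod_nonneg (by omega : (0 : ℤ) < ↑(n + 1)) x
  rw [chiN_eq_one_add]
  set d := min (x % ↑(n + 1)) (↑(n + 1) - x % ↑(n + 1))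
  rcases eq_or_ne d 0 with hd | hd
  · exact ⟨0, Nat.zero_le _, by simp [hd]⟩
  · have hd1 : (1 : ℝ) ≤ d := by exact_mod_cast (by omega : 1 ≤ d)
    exact ⟨l, le_rfl, pow_le_pow_left₀ (by positivity) (by linarith) l⟩

theorem norm_twistedSum_le {𝕜 : Type*} [NormedField 𝕜] {N : ℕ} {a : ℤ × ℤ → 𝕜} {ω ω' : 𝕜}
    (hω : ‖ω‖ = 1) (hω' : ‖ω'‖ = 1) {B : ℝ} (hB : ∀ j < N, ∀ j' < N, ‖a (j, j')‖ ≤ B) :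
    ‖twistedSum N a ω ω'‖ ≤ N ^ 2 * B := by
  calc ‖twistedSum N a ω ω'‖
      ≤ ∑ j ∈ range N, ∑ j' ∈ range N, ‖a (j, j') * ω ^ j * ω' ^ j'‖ :=
        (norm_sum_le _ _).trans (sum_le_sum fun _ _ => norm_sum_le _ _)
    _ ≤ ∑ j ∈ range N, ∑ j' ∈ range N, B := sum_le_sum fun j hj => sum_le_sum fun j' hj' => by
        simpa [hω, hω'] using hB j (mem_range.mp hj) j' (mem_range.mp hj')
    _ = N ^ 2 * B := by simp [sq, mul_assoc]

def gridSample (N : ℕ) : ℤ × ℤ →+ ℝ × ℝ :=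
  AddMonoidHom.mk' (fun p => ((p.1 : ℝ) / N, (p.2 : ℝ) / N)) fun p q => by simp [add_div]

theorem norm_gridSample_le_one {N j j' : ℕ} (hj : j ≤ N) (hj' : j' ≤ N) :
    ‖gridSample N (j, j')‖ ≤ 1 := by
  simp only [gridSample, AddMonoidHom.mk'_apply, Prod.norm_def, Int.cast_natCast, norm_div,
    RCLike.norm_natCast]
  exact max_le (div_le_one_of_le₀ (by exact_mod_cast hj) N.cast_nonneg)
    (div_le_one_of_le₀ (by exact_mod_cast hj') N.cast_nonneg)

theorem Function.Periodic.comp_addMonoidHom {G H F : Type*} [AddCommMonoid G]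
    [AddCommMonoid H] {f : H → F} (g : G →+ H) {c : G} (hf : Function.Periodic f (g c)) :
    Function.Periodic (f ∘ g) c := fun p => by simp [hf (g p)]

theorem norm_iterate_fwdDiff_gridSample_le {F : Type*} [NormedAddCommGroup F] [NormedSpace ℝ F]
    {k : ℕ} {Φ : ℝ × ℝ → F} (hΦ : ContDiff ℝ k Φ) {M : ℝ}
    (hM : ∀ m ≤ k, ∀ q : ℝ × ℝ, ‖q‖ ≤ k + 1 → ‖iteratedFDeriv ℝ m Φ q‖ ≤ M)
    {N : ℕ} (hN : N ≠ 0) {e e' : ℕ} (he : e + e' ≤ k) {p : ℤ × ℤ} (hp : ‖gridSample N p‖ ≤ 1) :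
    ‖((fwdDiff (-1, 0))^[e] ((fwdDiff (0, -1))^[e'] (Φ ∘ gridSample N))) p‖ ≤ M / N ^ (e + e') := by
  have hN' : (1 : ℝ) ≤ N := by exact_mod_cast Nat.one_le_iff_ne_zero.mpr hN
  set L := List.replicate e' ((0 : ℤ), (-1 : ℤ)) ++ List.replicate e (-1, 0)
  have hsteps : (L.map (gridSample N)).map norm = List.replicate (e' + e) (1 / N : ℝ) := by
    simp [L, gridSample, Prod.norm_def]
  have hlen : (L.map (gridSample N)).length = e + e' := by simp [L, add_comm]
  rw [← iterFwdDiff_replicate, ← iterFwdDiff_replicate, ← iterFwdDiff_append,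
    iterFwdDiff_comp_addMonoidHom, Function.comp_apply]
  refine (norm_iterFwdDiff_le _ (hΦ.of_le (by rw [hlen]; exact_mod_cast he))
    (fun q hq => hM _ (hlen ▸ he) q hq) ?_).trans_eq ?_
  · rw [hsteps, List.sum_replicate, nsmul_eq_mul]
    have hord : ((e' + e : ℕ) : ℝ) ≤ k := by exact_mod_cast (by omega : e' + e ≤ k)
    have := mul_le_of_le_one_right (e' + e).cast_nonneg (div_le_one_of_le₀ hN' N.cast_nonneg)
    linarith
  · rw [hsteps, List.prod_replicate, one_div_pow, add_comm e']
    ring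

theorem norm_twistedSum_gridSample_mul_le {k : ℕ} {Φ : ℝ × ℝ → ℂ} (hΦ : ContDiff ℝ k Φ) {M : ℝ}
    (hM : ∀ m ≤ k, ∀ q : ℝ × ℝ, ‖q‖ ≤ k + 1 → ‖iteratedFDeriv ℝ m Φ q‖ ≤ M)
    (hper₁ : Function.Periodic Φ (1, 0)) (hper₂ : Function.Periodic Φ (0, 1))
    {N : ℕ} (hN : N ≠ 0) {ω ω' : ℂ} (hω : ω ^ N = 1) (hω' : ω' ^ N = 1) (hω₁ : ‖ω‖ = 1)
    (hω₁' : ‖ω'‖ = 1) {e e' : ℕ} (he : e + e' ≤ k) :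
    ‖twistedSum N (Φ ∘ gridSample N) ω ω'‖ * ((N * ‖ω - 1‖) ^ e * (N * ‖ω' - 1‖) ^ e') ≤
      N ^ 2 * M := by
  have ha₁ : Function.Periodic (Φ ∘ gridSample N) (N, 0) :=
    Function.Periodic.comp_addMonoidHom _ (by simpa [gridSample, hN] using hper₁)
  have ha₂ : Function.Periodic (Φ ∘ gridSample N) (0, N) :=
    Function.Periodic.comp_addMonoidHom _ (by simpa [gridSample, hN] using hper₂)
  have hsum := norm_twistedSum_le hω₁ hω₁' fun j hj j' hj' =>
    norm_iterate_fwdDiff_gridSample_le hΦ hM hN he (norm_gridSample_le_one hj.le hj'.le)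
  rw [← sub_one_pow_mul_twistedSum hω hω' ha₁ ha₂, norm_mul, norm_mul, norm_pow, norm_pow] at hsum
  calc _ = N ^ (e + e') *
        (‖ω - 1‖ ^ e * ‖ω' - 1‖ ^ e' * ‖twistedSum N (Φ ∘ gridSample N) ω ω'‖) := by ring
    _ ≤ N ^ (e + e') * (N ^ 2 * (M / N ^ (e + e'))) := by gcongr
    _ = N ^ 2 * M := by field_simp

theorem sum_mul_exp_mul_exp_eq_twistedSum (Φ : ℝ × ℝ → ℂ) (n : ℕ) (x x' : ℤ) :
    ∑ j ∈ range (n + 1), ∑ j' ∈ range (n + 1),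
        Φ ((j : ℝ) / (n + 1), (j' : ℝ) / (n + 1)) *
          Complex.exp (2 * (π : ℂ) * Complex.I * (j : ℂ) * (x : ℂ) / ((n : ℂ) + 1)) *
          Complex.exp (2 * (π : ℂ) * Complex.I * (j' : ℂ) * (x' : ℂ) / ((n : ℂ) + 1)) =
      twistedSum (n + 1) (Φ ∘ gridSample (n + 1)) (unitRoot (n + 1) x) (unitRoot (n + 1) x') := by
  simp [twistedSum, gridSample, unitRoot_pow]

theorem oscillating_sum_decay_general (k : ℕ) (Φ : ℝ × ℝ → ℂ)
    (hΦ : ContDiff ℝ (k : ℕ∞) Φ)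
    (hper1 : ∀ u v : ℝ, Φ (u + 1, v) = Φ (u, v))
    (hper2 : ∀ u v : ℝ, Φ (u, v + 1) = Φ (u, v)) :
    ∃ C > 0, ∀ n : ℕ, 1 ≤ n → ∀ x x' : ℤ, ∀ l l' : ℕ, l + l' ≤ k →
      ‖((1 / ((n : ℂ) + 1) ^ 2) *
        ∑ j ∈ Finset.range (n + 1), ∑ j' ∈ Finset.range (n + 1),
          Φ ((j : ℝ) / (n + 1), (j' : ℝ) / (n + 1)) *
            Complex.exp (2 * (π : ℂ) * Complex.I * (j : ℂ) * (x : ℂ) / ((n : ℂ) + 1)) *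
            Complex.exp (2 * (π : ℂ) * Complex.I * (j' : ℂ) * (x' : ℂ) / ((n : ℂ) + 1)))‖
      ≤ C / (chiN n x ^ l * chiN n x' ^ l') := by
  obtain ⟨M, hM0, hM⟩ := exists_pos_bound_iteratedFDeriv hΦ (k + 1)
  refine ⟨M, hM0, fun n _ x x' l l' hll => ?_⟩
  obtain ⟨e, hel, hχ⟩ := exists_chiN_pow_le n x l
  obtain ⟨e', hel', hχ'⟩ := exists_chiN_pow_le n x' l'
  have hT := norm_twistedSum_gridSample_mul_le hΦ hM (fun ⟨u, v⟩ => by simpa using hper1 u v)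
    (fun ⟨u, v⟩ => by simpa using hper2 u v) n.succ_ne_zero (unitRoot_pow_self n.succ_ne_zero x)
    (unitRoot_pow_self n.succ_ne_zero x') (norm_unitRoot _ x) (norm_unitRoot _ x')
    (by omega : e + e' ≤ k)
  have hχ₁ := one_le_chiN n x
  have hχ₁' := one_le_chiN n x'
  rw [sum_mul_exp_mul_exp_eq_twistedSum, le_div_iff₀ (by positivity), norm_mul, norm_div, norm_one,
    norm_pow, show ‖(n : ℂ) + 1‖ = ((n + 1 : ℕ) : ℝ) by exact_mod_cast Complex.norm_natCast (n + 1)]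
  calc _ ≤ 1 / ((n + 1 : ℕ) : ℝ) ^ 2 * (‖twistedSum (n + 1) (Φ ∘ gridSample (n + 1))
          (unitRoot (n + 1) x) (unitRoot (n + 1) x')‖ *
        ((((n + 1 : ℕ) : ℝ) * ‖unitRoot (n + 1) x - 1‖) ^ e *
          (((n + 1 : ℕ) : ℝ) * ‖unitRoot (n + 1) x' - 1‖) ^ e')) := by
        rw [mul_assoc]
        gcongr
    _ ≤ 1 / ((n + 1 : ℕ) : ℝ) ^ 2 * (((n + 1 : ℕ) : ℝ) ^ 2 * M) := by gcongr
    _ = M := by field_simp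

/-- Decay estimate for the oscillating sums
`H^{(n)}_{x,x'} = (n+1)^{−2} Σ_{j,j'=0}^n Φ(j/(n+1), j'/(n+1)) e^{2πijx/(n+1)} e^{2πij'x'/(n+1)}`:
if `Φ` is `C^k` and `1`-periodic in each variable, then `|H^{(n)}_{x,x'}| ≤ C χ_n(x)^{−ℓ} χ_n(x')^{−ℓ'}`
for all `ℓ + ℓ' ≤ k`, uniformly in `n ≥ 1` and `x, x' ∈ ℤ`. -/
theorem oscillating_sum_decay (k : ℕ) (hk : 1 ≤ k) (Φ : ℝ × ℝ → ℂ)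
    (hΦ : ContDiff ℝ (k : ℕ∞) Φ)
    (hper1 : ∀ u v : ℝ, Φ (u + 1, v) = Φ (u, v))
    (hper2 : ∀ u v : ℝ, Φ (u, v + 1) = Φ (u, v)) :
    ∃ C > 0, ∀ n : ℕ, 1 ≤ n → ∀ x x' : ℤ, ∀ l l' : ℕ, l + l' ≤ k →
      ‖((1 / ((n : ℂ) + 1) ^ 2) *
        ∑ j ∈ Finset.range (n + 1), ∑ j' ∈ Finset.range (n + 1),
          Φ ((j : ℝ) / (n + 1), (j' : ℝ) / (n + 1)) *
            Complex.exp (2 * (π : ℂ) * Complex.I * (j : ℂ) * (x : ℂ) / ((n : ℂ) + 1)) *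
            Complex.exp (2 * (π : ℂ) * Complex.I * (j' : ℂ) * (x' : ℂ) / ((n : ℂ) + 1)))‖
      ≤ C / (chiN n x ^ l * chiN n x' ^ l') :=
  oscillating_sum_decay_general k Φ hΦ hper1 hper2

end
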